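/- In 𝔽₂[t₁,…,t₆], the product ∏_{1≤j<k≤6} (1 + t_j + t_k) is congruent to the product over all 4-element subsets S of {1,…,6} of (1 + Σ_{i∈S} t_i), modulo the ideal generated by e₁. -/
import Mathlib


open MvPolynomial Finset

/-- The `i`-th elementary symmetric polynomial in `𝔽₂[t₁,…,t₆]`. -/
noncomputable def e (i : ℕ) : MvPolynomial (Fin 6) (ZMod 2) :=
  esymm (Fin 6) (ZMod 2) i

/-- in `𝔽₂[t₁,…,t₆]`, `∏_{1≤j<k≤6} (1 + t_j + t_k)` is congruent
to `∏_{|S|=4}(1 + Σ_{i∈S} t_i)` modulo the ideal `(e₁)`; i.e. for `SU(6)` the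
mod 2 total Chern classes of `λ²` and `λ⁴` agree. -/
theorem chern_lambda2_eq_lambda4_SU6 :
    (∏ p ∈ univ.filter (fun p : Fin 6 × Fin 6 => p.1 < p.2),
        (1 + X p.1 + X p.2) : MvPolynomial (Fin 6) (ZMod 2))
      - ∏ s ∈ (univ : Finset (Fin 6)).powersetCard 4, (1 + ∑ i ∈ s, X i)
      ∈ Ideal.span {e 1} := by
  rw [← Ideal.Quotient.eq, map_prod, map_prod]
  refine Finset.prod_bij (fun p _ => (univ : Finset (Fin 6)) \ {p.1, p.2}) ?_ ?_ ?_ ?_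
  · decide
  · decide
  · decide
  · intro p hp
    simp only [Finset.mem_filter] at hp
    have hjk : p.1 ≠ p.2 := ne_of_lt hp.2
    rw [Ideal.Quotient.eq]
    have hsum : ∑ i ∈ (univ : Finset (Fin 6)) \ {p.1, p.2}, (X i : MvPolynomial (Fin 6) (ZMod 2))
        + ∑ i ∈ ({p.1, p.2} : Finset (Fin 6)), X i = ∑ i, X i :=
      Finset.sum_sdiff (Finset.subset_univ _)
    rw [Finset.sum_pair hjk] at hsum
    have h2 : (2 : MvPolynomial (Fin 6) (ZMod 2)) = 0 := by
      exact_mod_cast CharP.cast_eq_zero (MvPolynomial (Fin 6) (ZMod 2)) 2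
    have he : e 1 = ∑ i, (X i : MvPolynomial (Fin 6) (ZMod 2)) := by
      rw [e]; exact esymm_one _ _
    have : (1 + X p.1 + X p.2) - (1 + ∑ i ∈ (univ : Finset (Fin 6)) \ {p.1, p.2}, X i)
        = e 1 - 2 * (∑ i ∈ (univ : Finset (Fin 6)) \ {p.1, p.2}, X i) := by
      rw [he, ← hsum]; ring
    rw [this, h2, zero_mul, sub_zero]
    exact Ideal.subset_span (Set.mem_singleton (e 1))
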